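/- Let A and B be (possibly dependent) exponentially distributed random variables with means β_A > 0 and β_B > 0 respectively, and correlation coefficient ν ∈ [0,1), whose difference Δ = B − A has density f_Δ(δ) = (1/√((β_B−β_A)² + 4β_Aβ_B(1−ν))) · exp(−|δ|√((β_B−β_A)² + 4β_Aβ_B(1−ν))/(2β_Aβ_B(1−ν))) · exp(δ(β_B−β_A)/(2β_Aβ_B(1−ν))). Then for all ζ in the open interval (ζ_lo, ζ_hi), where ζ_lo = −(√((β_B−β_A)² + 4β_Aβ_B(1−ν)) + β_A − β_B)/(2β_Aβ_B(1−ν)) and ζ_hi = (√((β_B−β_A)² + 4β_Aβ_B(1−ν)) − β_A + β_B)/(2β_Aβ_B(1−ν)), the integral ∫ exp(−ζδ) f_Δ(δ) dδ over ℝ equals 1/(1 + (β_B − β_A)ζ − β_Aβ_B(1−ν)ζ²). -/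

import Mathlib

/-!
Multiplied by `exp (-ζ δ)`, the density becomes the two-sided exponential
`exp (a δ - b |δ|) / s` with `c = 2 βA βB (1 - ν)`, `s = √((βB - βA)² + 2c)`,
`a = (βB - βA)/c - ζ` and `b = s/c`. The strip `(ζ_lo, ζ_hi)` is exactly `|a| < b`, where
the integral is `2b / (s (b² - a²))`, and `c (b² - a²) / 2 = 1 + (βB - βA) ζ - βA βB (1 - ν) ζ²`.
-/

open MeasureTheory Real Set

lemma integral_exp_mul_sub_mul_abs {a b : ℝ} (h : |a| < b) :
    ∫ x : ℝ, exp (a * x - b * |x|) = 2 * b / (b ^ 2 - a ^ 2) := by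
  obtain ⟨hba, hab⟩ := abs_lt.mp h
  have hneg : EqOn (fun x ↦ exp (a * x - b * |x|)) (fun x ↦ exp ((a + b) * x)) (Iic 0) := by
    intro x hx
    simp only [abs_of_nonpos (mem_Iic.mp hx)]
    ring_nf
  have hpos : EqOn (fun x ↦ exp (a * x - b * |x|)) (fun x ↦ exp ((a - b) * x)) (Ioi 0) := by
    intro x hx
    simp only [abs_of_pos (mem_Ioi.mp hx)]
    ring_nf
  rw [← intervalIntegral.integral_Iic_add_Ioi
      ((integrableOn_exp_mul_Iic (by linarith) 0).congr_fun hneg.symm measurableSet_Iic)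
      ((integrableOn_exp_mul_Ioi (by linarith) 0).congr_fun hpos.symm measurableSet_Ioi),
    setIntegral_congr_fun measurableSet_Iic hneg, setIntegral_congr_fun measurableSet_Ioi hpos,
    integral_exp_mul_Iic (by linarith), integral_exp_mul_Ioi (by linarith)]
  simp only [mul_zero, exp_zero]
  have : a - b ≠ 0 := by linarith
  have : a + b ≠ 0 := by linarith
  have : b ^ 2 - a ^ 2 ≠ 0 := by nlinarith
  field_simp
  ring

theorem laplace_transform_exp_difference_general
    (βA βB ν : ℝ) (hβA : 0 < βA) (hβB : 0 < βB) (hν1 : ν < 1)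
    (ζ : ℝ)
    (hζlo : -((Real.sqrt ((βB - βA) ^ 2 + 4 * βA * βB * (1 - ν)) + βA - βB)
        / (2 * βA * βB * (1 - ν))) < ζ)
    (hζhi : ζ < (Real.sqrt ((βB - βA) ^ 2 + 4 * βA * βB * (1 - ν)) - βA + βB)
        / (2 * βA * βB * (1 - ν))) :
    ∫ δ : ℝ, Real.exp (-ζ * δ) *
        ((1 / Real.sqrt ((βB - βA) ^ 2 + 4 * βA * βB * (1 - ν)))
          * Real.exp (-|δ| * Real.sqrt ((βB - βA) ^ 2 + 4 * βA * βB * (1 - ν))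
              / (2 * βA * βB * (1 - ν)))
          * Real.exp (δ * (βB - βA) / (2 * βA * βB * (1 - ν))))
      = 1 / (1 + (βB - βA) * ζ - βA * βB * (1 - ν) * ζ ^ 2) := by
  set c := 2 * βA * βB * (1 - ν)
  set s := Real.sqrt ((βB - βA) ^ 2 + 4 * βA * βB * (1 - ν))
  have hc : 0 < c := mul_pos (by positivity) (sub_pos.mpr hν1)
  have hs : 0 < s := Real.sqrt_pos.mpr (by positivity)
  have hs2 : s ^ 2 = (βB - βA) ^ 2 + 2 * c := by rw [Real.sq_sqrt (by positivity)]; ring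
  set a := (βB - βA) / c - ζ with ha
  have hab : |a| < s / c := by
    rw [abs_lt]
    constructor <;> linarith [show (s - βA + βB) / c = (βB - βA) / c + s / c by ring,
      show -((s + βA - βB) / c) = (βB - βA) / c - s / c by ring]
  have hintegrand (δ : ℝ) :
      exp (-ζ * δ) * ((1 / s) * exp (-|δ| * s / c) * exp (δ * (βB - βA) / c))
        = 1 / s * exp (a * δ - s / c * |δ|) := by
    rw [ha, mul_left_comm, mul_assoc, ← exp_add, ← exp_add]
    ring_nf
  simp_rw [hintegrand]
  rw [integral_const_mul, integral_exp_mul_sub_mul_abs hab]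
  have hden : 0 < (s / c) ^ 2 - a ^ 2 :=
    sub_pos.mpr (sq_lt_sq' (abs_lt.mp hab).1 (abs_lt.mp hab).2)
  have hquad :
      1 + (βB - βA) * ζ - βA * βB * (1 - ν) * ζ ^ 2 = c / 2 * ((s / c) ^ 2 - a ^ 2) := by
    rw [ha]
    field_simp
    rw [hs2]
    ring
  rw [hquad]
  field_simp

/-- Two-sided Laplace transform of the density of the difference of two dependent
exponential random variables, on its strip of convergence. -/
theorem laplace_transform_exp_difference
    (βA βB ν : ℝ) (hβA : 0 < βA) (hβB : 0 < βB) (hν0 : 0 ≤ ν) (hν1 : ν < 1)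
    (ζ : ℝ)
    (hζlo : -((Real.sqrt ((βB - βA) ^ 2 + 4 * βA * βB * (1 - ν)) + βA - βB)
        / (2 * βA * βB * (1 - ν))) < ζ)
    (hζhi : ζ < (Real.sqrt ((βB - βA) ^ 2 + 4 * βA * βB * (1 - ν)) - βA + βB)
        / (2 * βA * βB * (1 - ν))) :
    ∫ δ : ℝ, Real.exp (-ζ * δ) *
        ((1 / Real.sqrt ((βB - βA) ^ 2 + 4 * βA * βB * (1 - ν)))
          * Real.exp (-|δ| * Real.sqrt ((βB - βA) ^ 2 + 4 * βA * βB * (1 - ν))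
              / (2 * βA * βB * (1 - ν)))
          * Real.exp (δ * (βB - βA) / (2 * βA * βB * (1 - ν))))
      = 1 / (1 + (βB - βA) * ζ - βA * βB * (1 - ν) * ζ ^ 2) :=
  laplace_transform_exp_difference_general βA βB ν hβA hβB hν1 ζ hζlo hζhi
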